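/- For every real number M > 0 and every (u,v) ∈ ℝ² with u·v < 1, the mixed second partial derivative of log Ω² satisfies ∂_u ∂_v (log Ω²)(u,v) = M·Ω²(u,v)/r(u,v)³; equivalently, the Gauss curvature K = (2/Ω²)·∂_u∂_v log Ω² of the Kruskal plane with metric -Ω² du dv equals 2M/r³, which blows up as r → 0. -/

import Mathlib

/-!
Along `s = u v` the conformal factor depends on `s` alone, `log Ω² = Φ(s)`, so
`∂_u ∂_v log Ω² = (s Φ'(s))'`. The inverse function theorem gives `r_M' = 1 / f_M'(r)`, and the
relation `s = f_M(r)` collapses `s Φ'(s)` to `4M²/r² - 1`. Differentiating once more yields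
`32 M⁴ e^{-r/2M} / r⁴ = M Ω² / r³`.
-/

/-- The Kruskal relation function `f_M(ρ) = (1 - ρ/(2M))·exp(ρ/(2M))`. -/
noncomputable def fM (M ρ : ℝ) : ℝ := (1 - ρ / (2 * M)) * Real.exp (ρ / (2 * M))

/-- The Kruskal radius `r(u,v) = r_M(u·v)`. -/
noncomputable def rK (rM : ℝ → ℝ) (u v : ℝ) : ℝ := rM (u * v)

/-- The conformal factor in Kruskal coordinates:
`Ω²(u,v) = (32M³/r(u,v))·exp(-r(u,v)/(2M))`. -/
noncomputable def Om2K (M : ℝ) (rM : ℝ → ℝ) (u v : ℝ) : ℝ :=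
  32 * M ^ 3 / rK rM u v * Real.exp (-(rK rM u v) / (2 * M))

open Set Filter Topology Real

theorem continuousAt_of_strictAntiOn_of_rightInvOn {α β : Type*}
    [LinearOrder α] [TopologicalSpace α] [OrderTopology α] [DenselyOrdered α]
    [LinearOrder β] [TopologicalSpace β] [OrderTopology β] {f : α → β} {g : β → α}
    {s : Set α} {U : Set β} (hs : IsOpen s) (hf : ContinuousOn f s) (hanti : StrictAntiOn f s)
    (hU : IsOpen U) (hgU : MapsTo g U s) (hfg : RightInvOn g f U) {x : β} (hx : x ∈ U) :
    ContinuousAt g x := by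
  have hg_anti : AntitoneOn g U := fun a ha b hb hab => by
    by_contra! h
    have := hanti (hgU ha) (hgU hb) h
    rw [hfg ha, hfg hb] at this
    exact this.not_ge hab
  have himage : s ∩ f ⁻¹' U ⊆ g '' U := fun ρ ⟨hρs, hρU⟩ =>
    ⟨f ρ, hρU, hanti.injOn (hgU hρU) hρs (hfg hρU)⟩
  have hmem : s ∩ f ⁻¹' U ∈ 𝓝 (g x) :=
    (hf.isOpen_inter_preimage hs hU).mem_nhds ⟨hgU hx, by rw [mem_preimage, hfg hx]; exact hx⟩
  exact continuousAt_of_monotoneOn_of_image_mem_nhds (β := αᵒᵈ) (f := OrderDual.toDual ∘ g)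
    hg_anti (hU.mem_nhds hx) (mem_of_superset hmem himage)

theorem deriv_deriv_comp_mul {Φ φ : ℝ → ℝ} {g' u v : ℝ}
    (hΦ : ∀ᶠ s in 𝓝 (u * v), HasDerivAt Φ (φ s) s) (hφ : DifferentiableAt ℝ φ (u * v))
    (hg : HasDerivAt (fun s => s * φ s) g' (u * v)) :
    deriv (fun u' => deriv (fun v' => Φ (u' * v')) v) u = g' := by
  have hmul : Tendsto (fun u' => u' * v) (𝓝 u) (𝓝 (u * v)) :=
    (continuous_id.mul continuous_const).tendsto u
  have hinner : (fun u' => deriv (fun v' => Φ (u' * v')) v) =ᶠ[𝓝 u] fun u' => u' * φ (u' * v) :=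
    (hmul.eventually hΦ).mono fun u' hu' =>
      (hu'.comp v ((hasDerivAt_id' v).const_mul u')).deriv.trans (by ring)
  have houter : HasDerivAt (fun u' => u' * φ (u' * v))
      (1 * φ (u * v) + u * (deriv φ (u * v) * (1 * v))) u :=
    (hasDerivAt_id' u).mul (hφ.hasDerivAt.comp u ((hasDerivAt_id' u).mul_const v))
  have hprod : HasDerivAt (fun s => s * φ s) (1 * φ (u * v) + u * v * deriv φ (u * v)) (u * v) :=
    (hasDerivAt_id' _).mul hφ.hasDerivAt
  rw [hinner.deriv_eq, houter.deriv, ← hprod.unique hg]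
  ring

theorem hasDerivAt_fM (M ρ : ℝ) :
    HasDerivAt (fM M) (-(ρ / (4 * M ^ 2)) * exp (ρ / (2 * M))) ρ := by
  have hlin : HasDerivAt (fun x => x / (2 * M)) (1 / (2 * M)) ρ := (hasDerivAt_id' ρ).div_const _
  exact ((hlin.const_sub 1).mul hlin.exp).congr_deriv (by ring)

theorem fM_strictAntiOn {M : ℝ} (hM : 0 < M) : StrictAntiOn (fM M) (Ioi 0) := by
  refine strictAntiOn_of_deriv_neg (convex_Ioi 0)
    (fun ρ _ => (hasDerivAt_fM M ρ).continuousAt.continuousWithinAt) fun ρ hρ => ?_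
  rw [interior_Ioi] at hρ
  have hρ : 0 < ρ := hρ
  rw [(hasDerivAt_fM M ρ).deriv, neg_mul]
  exact neg_neg_of_pos (by positivity)

theorem hasDerivAt_log_Om2 {M ρ : ℝ} (hM : M ≠ 0) (hρ : 0 < ρ) :
    HasDerivAt (fun ρ => log (32 * M ^ 3 / ρ * exp (-ρ / (2 * M)))) (-(1 / ρ + 1 / (2 * M))) ρ := by
  have h : HasDerivAt (fun ρ => log (32 * M ^ 3) - log ρ - ρ / (2 * M))
      (0 - 1 / ρ - 1 / (2 * M)) ρ :=
    ((hasDerivAt_const ρ _).sub ((hasDerivAt_log hρ.ne').congr_deriv (one_div ρ).symm)).sub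
      ((hasDerivAt_id' ρ).div_const _)
  refine (h.congr_of_eventuallyEq ((eventually_gt_nhds hρ).mono fun x hx => ?_)).congr_deriv
    (by ring)
  rw [log_mul (by positivity) (exp_pos _).ne', log_div (by positivity) hx.ne', log_exp]
  ring

/-- `Φ'(s)` for `Φ(s) = log Ω²` along `s = u v`, written in terms of `ρ = r_M(s)`. -/
noncomputable def logOm2Deriv (M ρ : ℝ) : ℝ := 2 * M * (2 * M + ρ) / ρ ^ 2 * exp (-ρ / (2 * M))

theorem fM_mul_logOm2Deriv {M ρ : ℝ} (hM : M ≠ 0) (hρ : ρ ≠ 0) :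
    fM M ρ * logOm2Deriv M ρ = 4 * M ^ 2 / ρ ^ 2 - 1 := by
  rw [fM, logOm2Deriv, neg_div, exp_neg]
  field_simp
  ring

section KruskalRadius

variable {M : ℝ} {rM : ℝ → ℝ}

theorem hasDerivAt_rM (hM : 0 < M) (hrM : ∀ s : ℝ, s < 1 → 0 < rM s ∧ fM M (rM s) = s)
    {s : ℝ} (hs : s < 1) :
    HasDerivAt rM (-(rM s / (4 * M ^ 2)) * exp (rM s / (2 * M)))⁻¹ s := by
  have hcont : ContinuousAt rM s :=
    continuousAt_of_strictAntiOn_of_rightInvOn isOpen_Ioi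
      (fun ρ _ => (hasDerivAt_fM M ρ).continuousAt.continuousWithinAt) (fM_strictAntiOn hM)
      isOpen_Iio (fun s hs => (hrM s hs).1) (fun s hs => (hrM s hs).2) hs
  have hr := (hrM s hs).1
  refine (hasDerivAt_fM M (rM s)).of_local_left_inverse hcont ?_
    ((eventually_lt_nhds hs).mono fun s hs => (hrM s hs).2)
  exact mul_ne_zero (neg_ne_zero.2 (by positivity)) (exp_pos _).ne'

theorem hasDerivAt_log_Om2_comp_rM (hM : 0 < M)
    (hrM : ∀ s : ℝ, s < 1 → 0 < rM s ∧ fM M (rM s) = s) {s : ℝ} (hs : s < 1) :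
    HasDerivAt (fun s => log (32 * M ^ 3 / rM s * exp (-rM s / (2 * M))))
      (logOm2Deriv M (rM s)) s := by
  have hr := (hrM s hs).1
  refine ((hasDerivAt_log_Om2 hM.ne' hr).comp s (hasDerivAt_rM hM hrM hs)).congr_deriv ?_
  rw [logOm2Deriv, neg_div, exp_neg]
  field_simp
  ring

theorem differentiableAt_logOm2Deriv_comp_rM (hM : 0 < M)
    (hrM : ∀ s : ℝ, s < 1 → 0 < rM s ∧ fM M (rM s) = s) {s : ℝ} (hs : s < 1) :
    DifferentiableAt ℝ (fun s => logOm2Deriv M (rM s)) s := by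
  have hr := (hrM s hs).1
  have h : DifferentiableAt ℝ (logOm2Deriv M) (rM s) := by
    unfold logOm2Deriv
    fun_prop (disch := positivity)
  exact h.comp s (hasDerivAt_rM hM hrM hs).differentiableAt

theorem hasDerivAt_mul_logOm2Deriv_comp_rM (hM : 0 < M)
    (hrM : ∀ s : ℝ, s < 1 → 0 < rM s ∧ fM M (rM s) = s) {s : ℝ} (hs : s < 1) :
    HasDerivAt (fun s => s * logOm2Deriv M (rM s))
      (M * (32 * M ^ 3 / rM s * exp (-rM s / (2 * M))) / rM s ^ 3) s := by
  have hr := (hrM s hs).1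
  have hk : HasDerivAt (fun ρ => 4 * M ^ 2 / ρ ^ 2 - 1) (-(8 * M ^ 2) / rM s ^ 3) (rM s) :=
    (((hasDerivAt_const _ _).div (hasDerivAt_pow 2 _) (by positivity)).sub_const 1).congr_deriv
      (by field_simp; ring)
  refine ((hk.comp s (hasDerivAt_rM hM hrM hs)).congr_of_eventuallyEq
    ((eventually_lt_nhds hs).mono fun t ht => ?_)).congr_deriv ?_
  · rw [Function.comp_apply, ← fM_mul_logOm2Deriv hM.ne' (hrM t ht).1.ne', (hrM t ht).2]
  · rw [neg_div (2 * M), exp_neg]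
    field_simp
    ring

end KruskalRadius

/-- For every `M > 0` and `(u,v)` with `u·v < 1`, the mixed second partial derivative of
`log Ω²` satisfies `∂_u ∂_v (log Ω²) = M·Ω²/r³`; equivalently, the Gauss curvature
`K = (2/Ω²)·∂_u∂_v log Ω²` of the Kruskal plane with metric `-Ω² du dv` equals `2M/r³`. -/
theorem gauss_curvature_kruskal_plane (M : ℝ) (hM : 0 < M) (rM : ℝ → ℝ)
    (hrM : ∀ s : ℝ, s < 1 → 0 < rM s ∧ fM M (rM s) = s)
    (u v : ℝ) (huv : u * v < 1) :
    deriv (fun u' : ℝ => deriv (fun v' : ℝ => Real.log (Om2K M rM u' v')) v) u =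
        M * Om2K M rM u v / (rK rM u v) ^ 3 ∧
      (2 / Om2K M rM u v) *
          deriv (fun u' : ℝ => deriv (fun v' : ℝ => Real.log (Om2K M rM u' v')) v) u =
        2 * M / (rK rM u v) ^ 3 := by
  have hmixed : deriv (fun u' => deriv (fun v' => log (Om2K M rM u' v')) v) u =
      M * Om2K M rM u v / rK rM u v ^ 3 :=
    deriv_deriv_comp_mul
      ((eventually_lt_nhds huv).mono fun s hs => hasDerivAt_log_Om2_comp_rM hM hrM hs)
      (differentiableAt_logOm2Deriv_comp_rM hM hrM huv)
      (hasDerivAt_mul_logOm2Deriv_comp_rM hM hrM huv)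
  have hr : 0 < rK rM u v := (hrM _ huv).1
  have hOm2 : 0 < Om2K M rM u v := by unfold Om2K; positivity
  refine ⟨hmixed, ?_⟩
  rw [hmixed]
  field_simp
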